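/- arXiv:1004.1262 — 3 statements merged into one kernel-verified Lean document; each statement's English description precedes it below -/
import Mathlib

section
/- (Theorem 3, bisimulation) If the variable set X contains every variable on which the modification behavior of S depends—formally, for every guard atom occurring in S on a path to an assignment of a variable of X, the atom's dependency set is contained in X, and every assigned expression to a variable of X depends only on X—then the concrete and abstract before-after relations coincide on X: for all s, s', Prd S s s' restricted to X holds iff Prd (TS X S) s s' restricted to X holds; i.e., {(s|X, s'|X) : Prd S s s'} = {(s|X, t') : Prd (TS X S) s t', t' = t'|X}. In particular the abstraction is a bisimulation with respect to the projection onto X. -/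
inductive CF (V D : Type) : Type where
  | atom (vars : Set V) (p : (V → D) → Prop)
      (h : ∀ s t : V → D, (∀ v ∈ vars, s v = t v) → (p s ↔ p t)) : CF V D
  | conj (P₁ P₂ : CF V D) : CF V D
  | disj (P₁ P₂ : CF V D) : CF V D

def eval {V D : Type} : CF V D → (V → D) → Prop
  | .atom _ p _, s => p s
  | .conj P₁ P₂, s => eval P₁ s ∧ eval P₂ s
  | .disj P₁ P₂, s => eval P₁ s ∨ eval P₂ s

open Classical in
noncomputable def TX {V D : Type} (X : Set V) : CF V D → CF V D
  | .atom vars p h => if vars ⊆ X then .atom vars p h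
      else .atom ∅ (fun _ => True) (fun _ _ _ => Iff.rfl)
  | .conj P₁ P₂ => .conj (TX X P₁) (TX X P₂)
  | .disj P₁ P₂ => .disj (TX X P₁) (TX X P₂)

inductive SubstV (V D : Type) : Type where
  | assignVar (x : V) (E : (V → D) → D) : SubstV V D
  | skip : SubstV V D
  | guard (P : CF V D) (S : SubstV V D) : SubstV V D
  | choice (S₁ S₂ : SubstV V D) : SubstV V D
  | anyVar (S : D → SubstV V D) : SubstV V D

def Prd {V D : Type} [DecidableEq V] : SubstV V D → (V → D) → (V → D) → Prop
  | .assignVar x E, s, s' => s' = Function.update s x (E s)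
  | .skip, s, s' => s' = s
  | .guard P S, s, s' => eval P s ∧ Prd S s s'
  | .choice S₁ S₂, s, s' => Prd S₁ s s' ∨ Prd S₂ s s'
  | .anyVar S, s, s' => ∃ d, Prd (S d) s s'

open Classical in
noncomputable def TS {V D : Type} (X : Set V) : SubstV V D → SubstV V D
  | .assignVar x E => if x ∈ X then .assignVar x E else .skip
  | .skip => .skip
  | .guard P S => .guard (TX X P) (TS X S)
  | .choice S₁ S₂ => .choice (TS X S₁) (TS X S₂)
  | .anyVar S => .anyVar (fun d => TS X (S d))

def DFClosed {V D : Type} (X : Set V) : SubstV V D → Prop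
  | .assignVar x E => x ∈ X → ∀ s t : V → D, (∀ v ∈ X, s v = t v) → E s = E t
  | .skip => True
  | .guard _ S => DFClosed X S
  | .choice S₁ S₂ => DFClosed X S₁ ∧ DFClosed X S₂
  | .anyVar S => ∀ d, DFClosed X (S d)

def GuardAtomsIn {V D : Type} (X : Set V) : CF V D → Prop
  | .atom vars _ _ => vars ⊆ X
  | .conj P₁ P₂ => GuardAtomsIn X P₁ ∧ GuardAtomsIn X P₂
  | .disj P₁ P₂ => GuardAtomsIn X P₁ ∧ GuardAtomsIn X P₂

def CFClosed {V D : Type} (X : Set V) : SubstV V D → Prop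
  | .assignVar _ _ => True
  | .skip => True
  | .guard P S => GuardAtomsIn X P ∧ CFClosed X S
  | .choice S₁ S₂ => CFClosed X S₁ ∧ CFClosed X S₂
  | .anyVar S => ∀ d, CFClosed X (S d)


theorem eval_TX {V D : Type} (X : Set V) (P : CF V D) (h : GuardAtomsIn X P) :
    ∀ s, eval (TX X P) s ↔ eval P s := by
  induction P with
  | atom vars p hp =>
    intro s
    have h' : vars ⊆ X := h
    simp only [TX, if_pos h', eval]
  | conj P₁ P₂ ih₁ ih₂ =>
    intro s
    simp only [TX, eval, ih₁ h.1, ih₂ h.2]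
  | disj P₁ P₂ ih₁ ih₂ =>
    intro s
    simp only [TX, eval, ih₁ h.1, ih₂ h.2]

theorem prd_to_abs {V D : Type} [DecidableEq V] (X : Set V) (S : SubstV V D)
    (H2 : CFClosed X S) :
    ∀ s s'', Prd S s s'' → ∃ t'', Prd (TS X S) s t'' ∧ ∀ v ∈ X, t'' v = s'' v := by
  induction S with
  | assignVar x E =>
    intro s s'' h
    by_cases hx : x ∈ X
    · exact ⟨s'', by simpa [TS, if_pos hx] using h, fun v _ => rfl⟩
    · refine ⟨s, by simp [TS, if_neg hx, Prd], fun v hv => ?_⟩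
      subst h
      simp only [Function.update]
      rw [dif_neg (fun h : v = x => hx (h ▸ hv))]
  | skip =>
    intro s s'' h
    exact ⟨s'', h, fun v _ => rfl⟩
  | guard P S ih =>
    intro s s'' h
    obtain ⟨t'', ht, hagree⟩ := ih H2.2 s s'' h.2
    exact ⟨t'', ⟨(eval_TX X P H2.1 s).mpr h.1, ht⟩, hagree⟩
  | choice S₁ S₂ ih₁ ih₂ =>
    intro s s'' h
    cases h with
    | inl h => obtain ⟨t'', ht, ha⟩ := ih₁ H2.1 s s'' h; exact ⟨t'', Or.inl ht, ha⟩
    | inr h => obtain ⟨t'', ht, ha⟩ := ih₂ H2.2 s s'' h; exact ⟨t'', Or.inr ht, ha⟩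
  | anyVar S ih =>
    intro s s'' h
    obtain ⟨d, hd⟩ := h
    obtain ⟨t'', ht, ha⟩ := ih d (H2 d) s s'' hd
    exact ⟨t'', ⟨d, ht⟩, ha⟩

theorem abs_to_prd {V D : Type} [DecidableEq V] (X : Set V) (S : SubstV V D)
    (H2 : CFClosed X S) :
    ∀ s t'', Prd (TS X S) s t'' → ∃ s'', Prd S s s'' ∧ ∀ v ∈ X, s'' v = t'' v := by
  induction S with
  | assignVar x E =>
    intro s t'' h
    by_cases hx : x ∈ X
    · exact ⟨t'', by simpa [TS, if_pos hx] using h, fun v _ => rfl⟩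
    · refine ⟨Function.update s x (E s), rfl, fun v hv => ?_⟩
      simp only [TS, if_neg hx, Prd] at h
      subst h
      simp only [Function.update]
      rw [dif_neg (fun h : v = x => hx (h ▸ hv))]
  | skip =>
    intro s t'' h
    exact ⟨t'', h, fun v _ => rfl⟩
  | guard P S ih =>
    intro s t'' h
    obtain ⟨s'', hs, hagree⟩ := ih H2.2 s t'' h.2
    exact ⟨s'', ⟨(eval_TX X P H2.1 s).mp h.1, hs⟩, hagree⟩
  | choice S₁ S₂ ih₁ ih₂ =>
    intro s t'' h
    cases h with
    | inl h => obtain ⟨s'', hs, ha⟩ := ih₁ H2.1 s t'' h; exact ⟨s'', Or.inl hs, ha⟩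
    | inr h => obtain ⟨s'', hs, ha⟩ := ih₂ H2.2 s t'' h; exact ⟨s'', Or.inr hs, ha⟩
  | anyVar S ih =>
    intro s t'' h
    obtain ⟨d, hd⟩ := h
    obtain ⟨s'', hs, ha⟩ := ih d (H2 d) s t'' hd
    exact ⟨s'', ⟨d, hs⟩, ha⟩

theorem stmt14 {V D : Type} [DecidableEq V] (X : Set V) (S : SubstV V D)
    (H1 : DFClosed X S) (H2 : CFClosed X S) :
    ∀ s s' : V → D,
      (∃ s'', Prd S s s'' ∧ ∀ v ∈ X, s'' v = s' v) ↔
      (∃ t'', Prd (TS X S) s t'' ∧ ∀ v ∈ X, t'' v = s' v) := by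
  intro s s'
  constructor
  · rintro ⟨s'', hP, ha⟩
    obtain ⟨t'', ht, hta⟩ := prd_to_abs X S H2 s s'' hP
    exact ⟨t'', ht, fun v hv => (hta v hv).trans (ha v hv)⟩
  · rintro ⟨t'', hP, ha⟩
    obtain ⟨s'', hs, hsa⟩ := abs_to_prd X S H2 s t'' hP
    exact ⟨s'', hs, fun v hv => (hsa v hv).trans (ha v hv)⟩
end

section
/- Traces are preserved under bisimulation-closure hypotheses: if for every event S in a finite set Ev, X satisfies the closure conditions (all guards of S depend only on X and all expressions assigned to X-variables depend only on X), then the set of traces (finite sequences of event labels executable from a given initial state, where executability is nonemptiness of the before-after relation composed along the sequence) of the concrete event system equals the set of traces of the abstracted event system obtained by applying TS X to each event, provided the initial states agree on X. -/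
def Execs {V D E : Type} [DecidableEq V] (ev : E → SubstV V D) : List E → (V → D) → Prop
  | [], _ => True
  | e :: l, s => ∃ s', Prd (ev e) s s' ∧ Execs ev l s'

lemma TX_eq {V D : Type} (X : Set V) (P : CF V D) (h : GuardAtomsIn X P) :
    TX X P = P := by
  induction P with
  | atom vars p hp => exact if_pos (h : vars ⊆ X)
  | conj P₁ P₂ ih₁ ih₂ => simp [TX, ih₁ h.1, ih₂ h.2]
  | disj P₁ P₂ ih₁ ih₂ => simp [TX, ih₁ h.1, ih₂ h.2]

lemma eval_agree {V D : Type} (X : Set V) (P : CF V D) (h : GuardAtomsIn X P)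
    {s t : V → D} (hag : ∀ v ∈ X, s v = t v) : eval P s ↔ eval P t := by
  induction P with
  | atom vars p hp => exact hp s t (fun v hv => hag v (h hv))
  | conj P₁ P₂ ih₁ ih₂ => exact and_congr (ih₁ h.1) (ih₂ h.2)
  | disj P₁ P₂ ih₁ ih₂ => exact or_congr (ih₁ h.1) (ih₂ h.2)

lemma prd_fwd {V D : Type} [DecidableEq V] (X : Set V) (S : SubstV V D)
    (hdf : DFClosed X S) (hcf : CFClosed X S) {s t s' : V → D}
    (hag : ∀ v ∈ X, s v = t v) (h : Prd S s s') :
    ∃ t', Prd (TS X S) t t' ∧ ∀ v ∈ X, s' v = t' v := by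
  induction S generalizing s t s' with
  | assignVar x E =>
    by_cases hx : x ∈ X
    · refine ⟨Function.update t x (E t), by simp [TS, if_pos hx, Prd], fun v hv => ?_⟩
      subst h
      by_cases hvx : v = x
      · subst hvx; simp [hdf hx s t hag]
      · simp [Function.update_of_ne hvx, hag v hv]
    · refine ⟨t, by simp [TS, if_neg hx, Prd], fun v hv => ?_⟩
      subst h
      have hvx : v ≠ x := fun h => hx (h ▸ hv)
      simp [Function.update_of_ne hvx, hag v hv]
  | skip => exact ⟨t, by simp [TS, Prd], h ▸ hag⟩
  | guard P S ih =>
    obtain ⟨hP, hS⟩ := h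
    obtain ⟨t', ht', hag'⟩ := ih hdf hcf.2 hag hS
    exact ⟨t', ⟨by rw [TX_eq X P hcf.1]; exact (eval_agree X P hcf.1 hag).mp hP, ht'⟩, hag'⟩
  | choice S₁ S₂ ih₁ ih₂ =>
    rcases h with h | h
    · obtain ⟨t', ht', hag'⟩ := ih₁ hdf.1 hcf.1 hag h
      exact ⟨t', Or.inl ht', hag'⟩
    · obtain ⟨t', ht', hag'⟩ := ih₂ hdf.2 hcf.2 hag h
      exact ⟨t', Or.inr ht', hag'⟩
  | anyVar S ih =>
    obtain ⟨d, hd⟩ := h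
    obtain ⟨t', ht', hag'⟩ := ih d (hdf d) (hcf d) hag hd
    exact ⟨t', ⟨d, ht'⟩, hag'⟩

lemma prd_bwd {V D : Type} [DecidableEq V] (X : Set V) (S : SubstV V D)
    (hdf : DFClosed X S) (hcf : CFClosed X S) {s t t' : V → D}
    (hag : ∀ v ∈ X, s v = t v) (h : Prd (TS X S) t t') :
    ∃ s', Prd S s s' ∧ ∀ v ∈ X, s' v = t' v := by
  induction S generalizing s t t' with
  | assignVar x E =>
    refine ⟨Function.update s x (E s), rfl, fun v hv => ?_⟩
    by_cases hx : x ∈ X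
    · simp only [TS, if_pos hx, Prd] at h
      subst h
      by_cases hvx : v = x
      · subst hvx; simp [hdf hx s t hag]
      · simp [Function.update_of_ne hvx, hag v hv]
    · simp only [TS, if_neg hx, Prd] at h
      subst h
      have hvx : v ≠ x := fun h => hx (h ▸ hv)
      simp [Function.update_of_ne hvx, hag v hv]
  | skip => simp only [TS, Prd] at h; exact ⟨s, rfl, h ▸ hag⟩
  | guard P S ih =>
    obtain ⟨hP, hS⟩ := h
    rw [TX_eq X P hcf.1] at hP
    obtain ⟨s', hs', hag'⟩ := ih hdf hcf.2 hag hS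
    exact ⟨s', ⟨(eval_agree X P hcf.1 hag).mpr hP, hs'⟩, hag'⟩
  | choice S₁ S₂ ih₁ ih₂ =>
    rcases h with h | h
    · obtain ⟨s', hs', hag'⟩ := ih₁ hdf.1 hcf.1 hag h
      exact ⟨s', Or.inl hs', hag'⟩
    · obtain ⟨s', hs', hag'⟩ := ih₂ hdf.2 hcf.2 hag h
      exact ⟨s', Or.inr hs', hag'⟩
  | anyVar S ih =>
    obtain ⟨d, hd⟩ := h
    obtain ⟨s', hs', hag'⟩ := ih d (hdf d) (hcf d) hag hd
    exact ⟨s', ⟨d, hs'⟩, hag'⟩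

theorem stmt16 {V D E : Type} [DecidableEq V] [Fintype E] (X : Set V)
    (ev : E → SubstV V D) (s₀ t₀ : V → D)
    (hclos : ∀ e, DFClosed X (ev e) ∧ CFClosed X (ev e))
    (hinit : ∀ v ∈ X, s₀ v = t₀ v) :
    {l : List E | Execs ev l s₀} =
      {l : List E | Execs (fun e => TS X (ev e)) l t₀} := by
  ext l
  simp only [Set.mem_setOf_eq]
  induction l generalizing s₀ t₀ with
  | nil => simp [Execs]
  | cons e l ih =>
    constructor
    · rintro ⟨s', hs', hex⟩
      obtain ⟨t', ht', hag'⟩ := prd_fwd X (ev e) (hclos e).1 (hclos e).2 hinit hs'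
      exact ⟨t', ht', (ih _ _ hag').mp hex⟩
    · rintro ⟨t', ht', hex⟩
      obtain ⟨s', hs', hag'⟩ := prd_bwd X (ev e) (hclos e).1 (hclos e).2 hinit ht'
      exact ⟨s', hs', (ih _ _ hag').mpr hex⟩
end

section
/- Simulation implies trace inclusion for event systems: if R ⊆ σ × τ is a relation such that R s₀ t₀ and for every event label e and concrete step Prd (ev e) s s' with R s t there exists t' with PrdA (evA e) t t' and R s' t', then every trace of the concrete event system from s₀ is a trace of the abstract event system from t₀. Combined with the simulation theorem for TS X (with R the agreement-on-X relation), every trace of a concrete B event system is a trace of its syntactic abstraction. -/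
def ExecsRel {σ E : Type} (Tr : E → σ → σ → Prop) : List E → σ → Prop
  | [], _ => True
  | e :: l, s => ∃ s', Tr e s s' ∧ ExecsRel Tr l s'

theorem evalTX {V D : Type} (X : Set V) (P : CF V D) (s t : V → D)
    (hag : ∀ v ∈ X, s v = t v) (h : eval P s) : eval (TX X P) t := by
  induction P with
  | atom vars p hp =>
    simp only [TX]
    split
    · next hv => exact (hp s t fun v hv' => hag v (hv hv')).mp h
    · trivial
  | conj P₁ P₂ ih₁ ih₂ => exact ⟨ih₁ h.1, ih₂ h.2⟩
  | disj P₁ P₂ ih₁ ih₂ => exact h.elim (fun h => Or.inl (ih₁ h)) (fun h => Or.inr (ih₂ h))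

theorem simTS {V D : Type} [DecidableEq V] (X : Set V) (S : SubstV V D)
    (hdf : DFClosed X S) (s s' t : V → D) (hp : Prd S s s')
    (hag : ∀ v ∈ X, s v = t v) :
    ∃ t', Prd (TS X S) t t' ∧ ∀ v ∈ X, s' v = t' v := by
  induction S generalizing s s' t with
  | assignVar x Ex =>
    simp only [TS]
    subst hp
    split
    · next hx =>
      refine ⟨Function.update t x (Ex t), rfl, fun v hv => ?_⟩
      by_cases hvx : v = x
      · subst hvx; simp [Function.update_self, hdf hx s t hag]
      · simp [Function.update_of_ne hvx, hag v hv]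
    · next hx =>
      refine ⟨t, rfl, fun v hv => ?_⟩
      have hvx : v ≠ x := fun h => hx (h ▸ hv)
      simp [Function.update_of_ne hvx, hag v hv]
  | skip => exact ⟨t, rfl, hp ▸ hag⟩
  | guard P S ih =>
    obtain ⟨t', h1, h2⟩ := ih hdf s s' t hp.2 hag
    exact ⟨t', ⟨evalTX X P s t hag hp.1, h1⟩, h2⟩
  | choice S₁ S₂ ih₁ ih₂ =>
    rcases hp with hp | hp
    · obtain ⟨t', h1, h2⟩ := ih₁ hdf.1 s s' t hp hag
      exact ⟨t', Or.inl h1, h2⟩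
    · obtain ⟨t', h1, h2⟩ := ih₂ hdf.2 s s' t hp hag
      exact ⟨t', Or.inr h1, h2⟩
  | anyVar S ih =>
    obtain ⟨d, hp⟩ := hp
    obtain ⟨t', h1, h2⟩ := ih d (hdf d) s s' t hp hag
    exact ⟨t', ⟨d, h1⟩, h2⟩

theorem stmt19 {V D E : Type} [DecidableEq V] (X : Set V) :
    (∀ (σ τ : Type) (Tc : E → σ → σ → Prop) (Ta : E → τ → τ → Prop)
       (R : σ → τ → Prop) (s₀ : σ) (t₀ : τ),
      R s₀ t₀ →
      (∀ e s s' t, Tc e s s' → R s t → ∃ t', Ta e t t' ∧ R s' t') →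
      ∀ l, ExecsRel Tc l s₀ → ExecsRel Ta l t₀) ∧
    (∀ (ev : E → SubstV V D) (s₀ t₀ : V → D),
      (∀ e, DFClosed X (ev e)) →
      (∀ v ∈ X, s₀ v = t₀ v) →
      ∀ l, ExecsRel (fun e => Prd (ev e)) l s₀ →
        ExecsRel (fun e => Prd (TS X (ev e))) l t₀) := by
  have gen : ∀ (σ τ : Type) (Tc : E → σ → σ → Prop) (Ta : E → τ → τ → Prop)
      (R : σ → τ → Prop) (s₀ : σ) (t₀ : τ),
      R s₀ t₀ →
      (∀ e s s' t, Tc e s s' → R s t → ∃ t', Ta e t t' ∧ R s' t') →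
      ∀ l, ExecsRel Tc l s₀ → ExecsRel Ta l t₀ := by
    intro σ τ Tc Ta R s₀ t₀ hR hsim l
    induction l generalizing s₀ t₀ with
    | nil => intro _; trivial
    | cons e l ih =>
      rintro ⟨s', hstep, hrest⟩
      obtain ⟨t', h1, h2⟩ := hsim e s₀ s' t₀ hstep hR
      exact ⟨t', h1, ih s' t' h2 hrest⟩
  refine ⟨gen, fun ev s₀ t₀ hdf hag l => ?_⟩
  exact gen _ _ _ _ (fun s t => ∀ v ∈ X, s v = t v) s₀ t₀ hag
    (fun e s s' t hstep hR => simTS X (ev e) (hdf e) s s' t hstep hR) l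
end
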